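/- arXiv:1909.03891 — 12 statements merged into one kernel-verified Lean document; each statement's English description precedes it below -/
import Mathlib

section
/- Let μ̄ ∈ ℝ be arbitrary and define the updated coefficient vector w' = w + (μ̄/α) e x. Then the exact energy relation ‖w_o − w'‖² + (μ̄/α) ẽ² = ‖w_o − w‖² + (μ̄/α) n² + (μ̄/α) e² · ((μ̄/α)‖x‖² − 1) holds. -/
open RealInnerProductSpace

/-- exact energy relation for one (generalized) SM-NLMS step with
arbitrary step size `μb`. -/
theorem sm_nlms_energy_relation (N : ℕ) (w_o w x : EuclideanSpace ℝ (Fin (N + 1)))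
    (n δ μb : ℝ) (hδ : 0 < δ) :
    let d : ℝ := ⟪w_o, x⟫ + n
    let e : ℝ := d - ⟪w, x⟫
    let et : ℝ := ⟪w_o - w, x⟫
    let α : ℝ := ‖x‖ ^ 2 + δ
    let w' : EuclideanSpace ℝ (Fin (N + 1)) := w + ((μb / α) * e) • x
    ‖w_o - w'‖ ^ 2 + (μb / α) * et ^ 2 =
      ‖w_o - w‖ ^ 2 + (μb / α) * n ^ 2 +
        (μb / α) * e ^ 2 * ((μb / α) * ‖x‖ ^ 2 - 1) := by
  intro d e et α w'
  have hw' : w_o - w' = (w_o - w) - ((μb / α) * e) • x := by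
    simp [w', sub_add_eq_sub_sub]
  have hexp : ‖w_o - w'‖ ^ 2 =
      ‖w_o - w‖ ^ 2 - 2 * ((μb / α) * e) * et + ((μb / α) * e) ^ 2 * ‖x‖ ^ 2 := by
    rw [hw', norm_sub_sq_real, real_inner_smul_right, norm_smul, Real.norm_eq_abs,
      mul_pow, sq_abs]
    simp only [et]
    ring
  have he : e = et + n := by
    simp only [e, d, et, inner_sub_left]; ring
  rw [hexp, he]
  ring
end

section
/- Theorem (Local robustness of SM-NLMS). Let γ̄ ≥ 0 and define the SM-NLMS update: w' = w + (μ̄/α) e x with μ̄ = 1 − γ̄/|e| if |e| > γ̄, and w' = w otherwise. Then: (i) if |e| ≤ γ̄ then ‖w_o − w'‖ = ‖w_o − w‖; (ii) if |e| > γ̄ then ‖w_o − w'‖² + (μ̄/α) ẽ² < ‖w_o − w‖² + (μ̄/α) n². -/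
open RealInnerProductSpace

/-- local robustness of the SM-NLMS algorithm: (i) no update keeps the
coefficient deviation unchanged; (ii) when an update occurs, a strict energy bound holds. -/
theorem sm_nlms_local_robustness (N : ℕ) (w_o w x : EuclideanSpace ℝ (Fin (N + 1)))
    (n δ γ : ℝ) (hδ : 0 < δ) (hγ : 0 ≤ γ) :
    let d : ℝ := ⟪w_o, x⟫ + n
    let e : ℝ := d - ⟪w, x⟫
    let et : ℝ := ⟪w_o - w, x⟫
    let α : ℝ := ‖x‖ ^ 2 + δ
    let μb : ℝ := 1 - γ / |e|
    let w' : EuclideanSpace ℝ (Fin (N + 1)) :=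
      if γ < |e| then w + ((μb / α) * e) • x else w
    (|e| ≤ γ → ‖w_o - w'‖ = ‖w_o - w‖) ∧
    (γ < |e| →
      ‖w_o - w'‖ ^ 2 + (μb / α) * et ^ 2 < ‖w_o - w‖ ^ 2 + (μb / α) * n ^ 2) := by
  intro d e et α μb w'
  have hα : 0 < α := by positivity
  constructor
  · intro h
    have hw' : w' = w := if_neg (not_lt.mpr h)
    rw [hw']
  · intro h
    have habs : 0 < |e| := lt_of_le_of_lt hγ h
    have hw' : w' = w + ((μb / α) * e) • x := if_pos h
    have hμ1 : μb ≤ 1 := by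
      have : 0 ≤ γ / |e| := div_nonneg hγ (le_of_lt habs)
      simp only [μb]; linarith
    have hμ0 : 0 < μb := by
      have : γ / |e| < 1 := (div_lt_one habs).mpr h
      simp only [μb]; linarith
    have hex : e = et + n := by
      simp only [e, et, d, inner_sub_left]; ring
    set c : ℝ := (μb / α) * e with hc
    have hexp : ‖w_o - w'‖ ^ 2 = ‖w_o - w‖ ^ 2 - 2 * c * et + c ^ 2 * ‖x‖ ^ 2 := by
      rw [hw']
      have hv : w_o - (w + c • x) = (w_o - w) - c • x := by abel
      rw [hv, norm_sub_sq_real, real_inner_smul_right, norm_smul]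
      simp only [Real.norm_eq_abs, mul_pow, sq_abs]
      simp only [et]
      ring
    rw [hexp]
    have key : -2 * c * et + c ^ 2 * ‖x‖ ^ 2 + (μb / α) * (et ^ 2 - n ^ 2)
        = (μb / α) * e ^ 2 * ((μb * ‖x‖ ^ 2) / α - 1) := by
      rw [hc, hex]
      field_simp
      ring
    have hene : e ≠ 0 := abs_pos.mp habs
    have he2 : 0 < e ^ 2 := by positivity
    have hfac : (μb * ‖x‖ ^ 2) / α - 1 < 0 := by
      have hlt : μb * ‖x‖ ^ 2 < α := by
        have h1 : μb * ‖x‖ ^ 2 ≤ ‖x‖ ^ 2 := by nlinarith [sq_nonneg ‖x‖]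
        simp only [α]; linarith
      have := (div_lt_one hα).mpr hlt
      linarith
    have hneg : (μb / α) * e ^ 2 * ((μb * ‖x‖ ^ 2) / α - 1) < 0 := by
      have h1 : 0 < (μb / α) * e ^ 2 := by positivity
      exact mul_neg_of_pos_of_neg h1 hfac
    nlinarith [key, hneg]
end

section
/- Corollary (Global robustness of SM-NLMS). Let K ∈ ℕ and let K_up = {k : 0 ≤ k < K and |e(k)| > γ̄} be the set of iterations before K at which an update occurs. If K_up is nonempty, then ‖w_o − w(K)‖² + Σ_{k ∈ K_up} (μ̄(k)/α(k)) ẽ(k)² < ‖w_o − w(0)‖² + Σ_{k ∈ K_up} (μ̄(k)/α(k)) n(k)². -/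
open RealInnerProductSpace

/-- global robustness of the SM-NLMS algorithm over the iterations
`0, 1, ..., K-1`, where `Kup` is the set of iterations at which an update occurs. -/
theorem sm_nlms_global_robustness (N : ℕ) (w_o : EuclideanSpace ℝ (Fin (N + 1)))
    (x : ℕ → EuclideanSpace ℝ (Fin (N + 1))) (n : ℕ → ℝ) (δ γ : ℝ)
    (hδ : 0 < δ) (hγ : 0 ≤ γ)
    (w : ℕ → EuclideanSpace ℝ (Fin (N + 1)))
    (d e et α μb : ℕ → ℝ)
    (hd : ∀ k, d k = ⟪w_o, x k⟫ + n k)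
    (he : ∀ k, e k = d k - ⟪w k, x k⟫)
    (het : ∀ k, et k = ⟪w_o - w k, x k⟫)
    (hα : ∀ k, α k = ‖x k‖ ^ 2 + δ)
    (hμ : ∀ k, μb k = 1 - γ / |e k|)
    (hupd : ∀ k, w (k + 1) =
      if γ < |e k| then w k + ((μb k / α k) * e k) • x k else w k)
    (K : ℕ) (Kup : Finset ℕ)
    (hKup : Kup = (Finset.range K).filter fun k => γ < |e k|)
    (hne : Kup.Nonempty) :
    ‖w_o - w K‖ ^ 2 + ∑ k ∈ Kup, (μb k / α k) * (et k) ^ 2 <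
      ‖w_o - w 0‖ ^ 2 + ∑ k ∈ Kup, (μb k / α k) * (n k) ^ 2 := by
  have hαpos : ∀ k, 0 < α k := fun k => by rw [hα]; positivity
  have hee : ∀ k, e k = et k + n k := fun k => by
    rw [he, hd, het, inner_sub_left]; ring
  -- potential function
  set F : ℕ → ℝ := fun K =>
    ‖w_o - w K‖ ^ 2 + ∑ k ∈ (Finset.range K).filter (fun k => γ < |e k|),
      ((μb k / α k) * (et k) ^ 2 - (μb k / α k) * (n k) ^ 2) with hF
  have step : ∀ k, (γ < |e k| → F (k + 1) < F k) ∧ F (k + 1) ≤ F k := by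
    intro k
    have hfilt : (Finset.range (k + 1)).filter (fun j => γ < |e j|) =
        if γ < |e k| then
          insert k ((Finset.range k).filter (fun j => γ < |e j|))
        else (Finset.range k).filter (fun j => γ < |e j|) := by
      rw [Finset.range_add_one, Finset.filter_insert]
    by_cases hk : γ < |e k|
    · have hmain : F (k + 1) < F k := by
        simp only [hF, hfilt, if_pos hk]
        rw [Finset.sum_insert (by simp)]
        have hw : w (k + 1) = w k + ((μb k / α k) * e k) • x k := by
          rw [hupd k, if_pos hk]
        set c : ℝ := (μb k / α k) * e k with hc
        have hsub : w_o - w (k + 1) = (w_o - w k) - c • x k := by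
          rw [hw]; abel
        have hnorm : ‖w_o - w (k + 1)‖ ^ 2 =
            ‖w_o - w k‖ ^ 2 - 2 * (c * et k) + c ^ 2 * ‖x k‖ ^ 2 := by
          rw [hsub, norm_sub_sq_real, real_inner_smul_right, norm_smul, het]
          rw [mul_pow, Real.norm_eq_abs, sq_abs]
        rw [hnorm]
        -- numeric facts
        have hepos : 0 < |e k| := lt_of_le_of_lt hγ hk
        have he0 : e k ≠ 0 := fun h => by simp [h] at hepos
        have hμpos : 0 < μb k := by
          rw [hμ]
          have : γ / |e k| < 1 := (div_lt_one hepos).mpr hk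
          linarith
        have hμle : μb k ≤ 1 := by
          rw [hμ]
          have : 0 ≤ γ / |e k| := div_nonneg hγ (le_of_lt hepos)
          linarith
        have hxlt : μb k * ‖x k‖ ^ 2 < α k := by
          rw [hα]
          nlinarith [sq_nonneg (‖x k‖)]
        have he2 : 0 < e k ^ 2 := by rw [← sq_abs]; exact pow_pos hepos 2
        have hαk := hαpos k
        have hn : n k = e k - et k := by rw [hee]; ring
        rw [hc, hn]
        have hdiv : (μb k / α k) * ‖x k‖ ^ 2 < 1 := by
          rw [div_mul_eq_mul_div, div_lt_one hαk]; linarith [hxlt]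
        have hdivpos : 0 < μb k / α k := div_pos hμpos hαk
        nlinarith [mul_pos hdivpos he2, mul_pos (mul_pos hdivpos he2) (sub_pos.mpr hdiv),
          sq_nonneg (e k), sq_nonneg (et k)]
      exact ⟨fun _ => hmain, le_of_lt hmain⟩
    · have heq : F (k + 1) = F k := by
        simp only [hF, hfilt, if_neg hk, hupd k]
      exact ⟨fun h => absurd h hk, le_of_eq heq⟩
  have mono : ∀ j, F j ≤ F 0 := by
    intro j
    induction j with
    | zero => exact le_refl _
    | succ m ihm => exact le_trans (step m).2 ihm
  have main : ∀ K, (∃ j < K, γ < |e j|) → F K < F 0 := by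
    intro K
    induction K with
    | zero => rintro ⟨j, hj, _⟩; omega
    | succ K ih =>
      rintro ⟨j, hj, hje⟩
      rcases Nat.lt_succ_iff_lt_or_eq.mp hj with h | h
      · exact lt_of_le_of_lt (step K).2 (ih ⟨j, h, hje⟩)
      · subst h
        exact lt_of_lt_of_le ((step j).1 hje) (mono j)
  have hex : ∃ j < K, γ < |e j| := by
    obtain ⟨j, hj⟩ := hne
    rw [hKup, Finset.mem_filter, Finset.mem_range] at hj
    exact ⟨j, hj.1, hj.2⟩
  have := main K hex
  simp only [hF, hKup] at this ⊢
  rw [Finset.sum_sub_distrib] at this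
  simp at this
  linarith
end

section
/- Corollary. Let γ̄ ≥ 0 and let w' = w + (μ̄/α) e x with μ̄ = 1 − γ̄/|e| be the SM-NLMS update performed when |e| > γ̄. If an update occurs (|e| > γ̄) and ẽ² ≥ n², then ‖w_o − w'‖² < ‖w_o − w‖², i.e., the SM-NLMS update strictly improves the parameter estimate. -/
/-!
Write `v = w_o - w`, so that `w_o - w' = v - (t e) • x` with `t = μ̄ / α`. Expanding the square,
the update decreases `‖v‖²` as soon as `t² e² ‖x‖² < 2 t e ⟪v, x⟫`. Normalization gives
`t ‖x‖² < 1`, and `ẽ² ≥ n²` makes the observed error correlated with the noiseless one: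
`e² ≤ 2 e ẽ`.
-/

open RealInnerProductSpace

theorem sq_add_le_two_mul_add_mul {a b : ℝ} (h : b ^ 2 ≤ a ^ 2) :
    (a + b) ^ 2 ≤ 2 * (a + b) * a := by
  nlinarith

theorem norm_sub_mul_smul_sq_lt {E : Type*} [NormedAddCommGroup E] [InnerProductSpace ℝ E]
    (v x : E) {t e : ℝ} (ht : 0 < t) (htx : t * ‖x‖ ^ 2 < 1) (he : e ≠ 0)
    (hcorr : e ^ 2 ≤ 2 * e * ⟪v, x⟫) :
    ‖v - (t * e) • x‖ ^ 2 < ‖v‖ ^ 2 := by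
  rw [norm_sub_sq_real, real_inner_smul_right, norm_smul, mul_pow, Real.norm_eq_abs, sq_abs]
  have hquad : t * e ^ 2 * (t * ‖x‖ ^ 2) < t * e ^ 2 * 1 :=
    mul_lt_mul_of_pos_left htx (by positivity)
  have hlin : t * e ^ 2 ≤ t * (2 * e * ⟪v, x⟫) := mul_le_mul_of_nonneg_left hcorr ht.le
  nlinarith

/-- when the SM-NLMS algorithm performs an update (`|e| > γ`) and the
noiseless error dominates the noise (`ẽ² ≥ n²`), the update strictly improves the
parameter estimate. -/
theorem sm_nlms_update_improves (N : ℕ) (w_o w x : EuclideanSpace ℝ (Fin (N + 1)))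
    (n δ γ : ℝ) (hδ : 0 < δ) (hγ : 0 ≤ γ) :
    let d : ℝ := ⟪w_o, x⟫ + n
    let e : ℝ := d - ⟪w, x⟫
    let et : ℝ := ⟪w_o - w, x⟫
    let α : ℝ := ‖x‖ ^ 2 + δ
    let μb : ℝ := 1 - γ / |e|
    let w' : EuclideanSpace ℝ (Fin (N + 1)) := w + ((μb / α) * e) • x
    γ < |e| → n ^ 2 ≤ et ^ 2 → ‖w_o - w'‖ ^ 2 < ‖w_o - w‖ ^ 2 := by
  intro d e et α μb w' hupd hdom
  have he_pos : 0 < |e| := hγ.trans_lt hupd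
  have hμ_pos : 0 < μb := sub_pos.mpr ((div_lt_one he_pos).mpr hupd)
  have hμ_le : μb ≤ 1 := sub_le_self _ (div_nonneg hγ he_pos.le)
  have hα : 0 < α := by positivity
  have hstep : μb / α * ‖x‖ ^ 2 < 1 := by
    rw [div_mul_eq_mul_div, div_lt_one hα]
    nlinarith [sq_nonneg ‖x‖]
  have he : e = et + n := by
    simp only [e, et, d, inner_sub_left]
    ring
  have hcorr : e ^ 2 ≤ 2 * e * et := he ▸ sq_add_le_two_mul_add_mul hdom
  have hw' : w_o - w' = (w_o - w) - (μb / α * e) • x := sub_add_eq_sub_sub _ _ _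
  rw [hw']
  exact norm_sub_mul_smul_sq_lt _ _ (div_pos hμ_pos hα) hstep (abs_pos.mp he_pos) hcorr
end

section
/- Let γ̄ ≥ 0 and define the SM-NLMS update rule: w' = w + (μ̄/α) e x with μ̄ = 1 − γ̄/|e| if |e| > γ̄, and w' = w otherwise. If the coefficient deviation increases, i.e., ‖w_o − w'‖ > ‖w_o − w‖, then necessarily an update occurred and the noise dominated the noiseless error: |e| > γ̄ and ẽ² < n². -/
open RealInnerProductSpace

/-
A normalized step `w' = w + c • x` with `c = μ e / α`, `0 < μ ≤ 1`, `‖x‖² ≤ α`, changes the squared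
deviation `‖w_o - w‖²` by `c² ‖x‖² - 2 c ẽ ≤ c (μ e - 2 ẽ)`, so an increase forces `2 e ẽ < μ e² ≤ e²`.
Since `e = ẽ + n`, this says `e² - 2 e ẽ = n² - ẽ² > 0`. Without an update nothing changes at all.
-/

section NormalizedStep

variable {E : Type*} [NormedAddCommGroup E] [InnerProductSpace ℝ E]

theorem norm_sub_smul_sq (v x : E) (c : ℝ) :
    ‖v - c • x‖ ^ 2 = ‖v‖ ^ 2 - 2 * c * ⟪v, x⟫ + c ^ 2 * ‖x‖ ^ 2 := by
  rw [norm_sub_sq_real, real_inner_smul_right, norm_smul, mul_pow, Real.norm_eq_abs, sq_abs]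
  ring

theorem two_mul_inner_lt_of_norm_lt_norm_sub_smul {v x : E} {c : ℝ} (h : ‖v‖ < ‖v - c • x‖) :
    2 * c * ⟪v, x⟫ < c ^ 2 * ‖x‖ ^ 2 := by
  have hsq := pow_lt_pow_left₀ h (norm_nonneg v) two_ne_zero
  rw [norm_sub_smul_sq] at hsq
  linarith

theorem two_mul_inner_lt_sq_of_norm_lt_norm_sub_normalized_smul {v x : E} {μ e α : ℝ}
    (hμ : 0 < μ) (hμ₁ : μ ≤ 1) (hα : 0 < α) (hxα : ‖x‖ ^ 2 ≤ α)
    (h : ‖v‖ < ‖v - (μ / α * e) • x‖) :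
    2 * e * ⟪v, x⟫ < e ^ 2 := by
  have hstep := two_mul_inner_lt_of_norm_lt_norm_sub_smul h
  have hgain : (μ / α * e) ^ 2 * ‖x‖ ^ 2 ≤ (μ / α * e) ^ 2 * α :=
    mul_le_mul_of_nonneg_left hxα (sq_nonneg _)
  have hscaled : μ / α * (e * (2 * ⟪v, x⟫ - μ * e)) < 0 := by
    have : (μ / α * e) ^ 2 * α = μ / α * e * (μ * e) := by field_simp
    linarith
  have hneg : e * (2 * ⟪v, x⟫ - μ * e) < 0 := neg_of_mul_neg_right hscaled (div_pos hμ hα).le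
  linarith [mul_le_mul_of_nonneg_right hμ₁ (sq_nonneg e)]

end NormalizedStep

theorem sq_lt_sq_of_two_mul_lt_sq_add {t n : ℝ} (h : 2 * (t + n) * t < (t + n) ^ 2) :
    t ^ 2 < n ^ 2 := by
  linarith

/-- if the coefficient deviation increases after one step of the SM-NLMS
algorithm, then necessarily an update occurred and the noise dominated the noiseless
error. -/
theorem sm_nlms_deviation_increase_necessary (N : ℕ)
    (w_o w x : EuclideanSpace ℝ (Fin (N + 1)))
    (n δ γ : ℝ) (hδ : 0 < δ) (hγ : 0 ≤ γ) :
    let d : ℝ := ⟪w_o, x⟫ + n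
    let e : ℝ := d - ⟪w, x⟫
    let et : ℝ := ⟪w_o - w, x⟫
    let α : ℝ := ‖x‖ ^ 2 + δ
    let μb : ℝ := 1 - γ / |e|
    let w' : EuclideanSpace ℝ (Fin (N + 1)) :=
      if γ < |e| then w + ((μb / α) * e) • x else w
    ‖w_o - w‖ < ‖w_o - w'‖ → γ < |e| ∧ et ^ 2 < n ^ 2 := by
  intro d e et α μb w' hlt
  by_cases hupd : γ < |e|
  swap
  · simp only [w', if_neg hupd, lt_self_iff_false] at hlt
  have he : 0 < |e| := hγ.trans_lt hupd
  have hμ : 0 < μb := sub_pos.2 ((div_lt_one he).2 hupd)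
  have hμ₁ : μb ≤ 1 := sub_le_self _ (div_nonneg hγ he.le)
  have hdev : w_o - w' = (w_o - w) - (μb / α * e) • x := by
    simp only [w', if_pos hupd]
    abel
  have hinc := two_mul_inner_lt_sq_of_norm_lt_norm_sub_normalized_smul hμ hμ₁
    (by positivity) (le_add_of_nonneg_right hδ.le) (hdev ▸ hlt)
  have he_split : e = et + n := by
    simp only [e, d, et, inner_sub_left]
    ring
  exact ⟨hupd, sq_lt_sq_of_two_mul_lt_sq_add (he_split ▸ hinc)⟩
end

section
/- Theorem (Strong local robustness of SM-NLMS). Assume the noise is bounded by a known constant B ≥ 0, i.e., |n(k)| ≤ B for all k, and that the threshold satisfies γ̄ ≥ 2B. Then the sequence of squared coefficient deviations is monotonically nonincreasing: ‖w_o − w(k+1)‖ ≤ ‖w_o − w(k)‖ for every k ∈ ℕ. -/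
open RealInnerProductSpace

/-! With `v = w_o - w(k)`, an update is the step `v ↦ v - t x` with `⟪v, x⟫ = e - n`, and
`‖v - t x‖² = ‖v‖² - (2 t (e - n) - t² ‖x‖²)`. The SM-NLMS coefficient `t` has the sign of
`e` and `|t| α = |e| - γ̄`; as `‖x‖² ≤ α`, the bracket is nonnegative as soon as
`|e| - γ̄ ≤ 2 (|e| - |n|)`, which `2|n| ≤ 2B ≤ γ̄` guarantees. -/

theorem norm_sub_smul_le_of_sq_mul_le {E : Type*} [NormedAddCommGroup E]
    [InnerProductSpace ℝ E] {v x : E} {t : ℝ}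
    (h : t ^ 2 * ‖x‖ ^ 2 ≤ 2 * t * ⟪v, x⟫) : ‖v - t • x‖ ≤ ‖v‖ := by
  refine (pow_le_pow_iff_left₀ (norm_nonneg _) (norm_nonneg _) two_ne_zero).mp ?_
  rw [norm_sub_sq_real, inner_smul_right, norm_smul, mul_pow, Real.norm_eq_abs, sq_abs]
  linarith

theorem shrink_sq_le_two_mul_sub {e ν γ : ℝ} (he : γ < |e|) (hν : 2 * |ν| ≤ γ) :
    ((1 - γ / |e|) * e) ^ 2 ≤ 2 * ((1 - γ / |e|) * e) * (e - ν) := by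
  have he0 : 0 < |e| := by linarith [abs_nonneg ν]
  set c := (1 - γ / |e|) * e
  have hce : c * e = (|e| - γ) * |e| := by
    rw [show c * e = (1 - γ / |e|) * |e| ^ 2 by rw [sq_abs]; ring]
    field_simp
  have hc : |c| = |e| - γ := by
    rw [abs_mul, abs_of_pos (by rw [sub_pos, div_lt_one he0]; exact he)]
    field_simp
  have hcν : c * ν ≤ (|e| - γ) * |ν| := hc ▸ (le_abs_self _).trans (abs_mul c ν).le
  have hc2 : c ^ 2 = (|e| - γ) ^ 2 := by rw [← sq_abs, hc]
  nlinarith [abs_nonneg ν]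

theorem sm_nlms_step_norm_le {E : Type*} [NormedAddCommGroup E] [InnerProductSpace ℝ E]
    {v x : E} {e ν γ α : ℝ} (hα : 0 < α) (hxα : ‖x‖ ^ 2 ≤ α)
    (hvx : ⟪v, x⟫ = e - ν) (he : γ < |e|) (hν : 2 * |ν| ≤ γ) :
    ‖v - ((1 - γ / |e|) / α * e) • x‖ ≤ ‖v‖ := by
  refine norm_sub_smul_le_of_sq_mul_le ?_
  set c := (1 - γ / |e|) * e
  have hc := shrink_sq_le_two_mul_sub he hν
  rw [div_mul_eq_mul_div, hvx]
  calc (c / α) ^ 2 * ‖x‖ ^ 2 ≤ (c / α) ^ 2 * α := by gcongr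
    _ = c ^ 2 / α := by field_simp
    _ ≤ 2 * c * (e - ν) / α := by gcongr
    _ = 2 * (c / α) * (e - ν) := by ring

theorem sm_nlms_strong_local_robustness_general (N : ℕ)
    (w_o : EuclideanSpace ℝ (Fin (N + 1)))
    (x : ℕ → EuclideanSpace ℝ (Fin (N + 1))) (n : ℕ → ℝ) (δ γ B : ℝ)
    (hδ : 0 < δ)
    (hn : ∀ k, |n k| ≤ B) (hγ : 2 * B ≤ γ)
    (w : ℕ → EuclideanSpace ℝ (Fin (N + 1)))
    (d e α μb : ℕ → ℝ)
    (hd : ∀ k, d k = ⟪w_o, x k⟫ + n k)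
    (he : ∀ k, e k = d k - ⟪w k, x k⟫)
    (hα : ∀ k, α k = ‖x k‖ ^ 2 + δ)
    (hμ : ∀ k, μb k = 1 - γ / |e k|)
    (hupd : ∀ k, w (k + 1) =
      if γ < |e k| then w k + ((μb k / α k) * e k) • x k else w k) :
    ∀ k, ‖w_o - w (k + 1)‖ ≤ ‖w_o - w k‖ := by
  intro k
  rw [hupd k]
  split_ifs with hk
  · have hvx : ⟪w_o - w k, x k⟫ = e k - n k := by
      rw [he, hd, inner_sub_left]
      ring
    rw [sub_add_eq_sub_sub, hμ]
    exact sm_nlms_step_norm_le (by rw [hα]; positivity) (by rw [hα]; linarith) hvx hk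
      (by linarith [hn k])
  · exact le_rfl

/-- strong local robustness of the SM-NLMS algorithm: if the noise is
bounded by a known constant `B` and the threshold satisfies `γ ≥ 2B`, then the sequence
of coefficient deviations is monotonically nonincreasing. -/
theorem sm_nlms_strong_local_robustness (N : ℕ)
    (w_o : EuclideanSpace ℝ (Fin (N + 1)))
    (x : ℕ → EuclideanSpace ℝ (Fin (N + 1))) (n : ℕ → ℝ) (δ γ B : ℝ)
    (hδ : 0 < δ) (hγ0 : 0 ≤ γ) (hB : 0 ≤ B)
    (hn : ∀ k, |n k| ≤ B) (hγ : 2 * B ≤ γ)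
    (w : ℕ → EuclideanSpace ℝ (Fin (N + 1)))
    (d e et α μb : ℕ → ℝ)
    (hd : ∀ k, d k = ⟪w_o, x k⟫ + n k)
    (he : ∀ k, e k = d k - ⟪w k, x k⟫)
    (het : ∀ k, et k = ⟪w_o - w k, x k⟫)
    (hα : ∀ k, α k = ‖x k‖ ^ 2 + δ)
    (hμ : ∀ k, μb k = 1 - γ / |e k|)
    (hupd : ∀ k, w (k + 1) =
      if γ < |e k| then w k + ((μb k / α k) * e k) • x k else w k) :
    ∀ k, ‖w_o - w (k + 1)‖ ≤ ‖w_o - w k‖ :=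
  sm_nlms_strong_local_robustness_general N w_o x n δ γ B hδ hn hγ w d e α μb hd he hα hμ hupd
end

section
/- Corollary (Strong global robustness of SM-NLMS). Assume the noise is bounded by a known constant B ≥ 0, i.e., |n(k)| ≤ B for all k, and that the threshold satisfies γ̄ ≥ 2B. Then for every K ∈ ℕ, ‖w_o − w(K)‖ ≤ ‖w_o − w(0)‖. -/
open RealInnerProductSpace

/-!
Whenever SM-NLMS updates, the coefficient deviation `v = w_o - w(k)` is replaced by
`v - c x(k)` with `c = μ̄ e / α`, and `‖v - c x‖² = ‖v‖² - 2c⟨v, x⟩ + c²‖x‖²`. Since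
`⟨v, x⟩ = e - n` and `μ̄ |e| = |e| - γ̄`, the cross term dominates exactly when
`2 e n ≤ |e|² + γ̄ |e|`, which `|n| ≤ B ≤ γ̄ / 2` guarantees. Hence the deviation never grows.
-/

theorem norm_sub_smul_le_norm_of_sq_mul_le {E : Type*} [NormedAddCommGroup E]
    [InnerProductSpace ℝ E] {v x : E} {c : ℝ} (h : c ^ 2 * ‖x‖ ^ 2 ≤ 2 * c * ⟪v, x⟫) :
    ‖v - c • x‖ ≤ ‖v‖ := by
  have hsq : ‖v - c • x‖ ^ 2 ≤ ‖v‖ ^ 2 := by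
    rw [norm_sub_sq_real, real_inner_smul_right, norm_smul, mul_pow, Real.norm_eq_abs, sq_abs]
    linarith
  exact (sq_le_sq₀ (norm_nonneg _) (norm_nonneg _)).mp hsq

theorem sq_mul_le_of_mul_sq_le {μ e t r α : ℝ} (hμ : 0 ≤ μ) (hα : 0 < α) (hr : r ≤ α)
    (h : μ * e ^ 2 ≤ 2 * e * t) :
    (μ / α * e) ^ 2 * r ≤ 2 * (μ / α * e) * t :=
  calc (μ / α * e) ^ 2 * r
      ≤ (μ / α * e) ^ 2 * α := mul_le_mul_of_nonneg_left hr (sq_nonneg _)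
    _ = μ / α * (μ * e ^ 2) := by field_simp
    _ ≤ μ / α * (2 * e * t) := mul_le_mul_of_nonneg_left h (div_nonneg hμ hα.le)
    _ = 2 * (μ / α * e) * t := by ring

theorem one_sub_div_abs_mul_sq_le {e n γ B : ℝ} (hn : |n| ≤ B) (hγ : 2 * B ≤ γ)
    (he : γ < |e|) :
    (1 - γ / |e|) * e ^ 2 ≤ 2 * e * (e - n) := by
  have he0 : 0 < |e| := by linarith [abs_nonneg n]
  have hen : e * n ≤ |e| * B :=
    (le_abs_self _).trans ((abs_mul e n).trans_le (mul_le_mul_of_nonneg_left hn he0.le))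
  have hμe : (1 - γ / |e|) * e ^ 2 = |e| ^ 2 - γ * |e| := by
    rw [← sq_abs e]; field_simp
  rw [hμe]
  nlinarith [sq_abs e, mul_nonneg he0.le (sub_nonneg.mpr hγ)]

theorem sm_nlms_strong_global_robustness_general (N : ℕ)
    (w_o : EuclideanSpace ℝ (Fin (N + 1)))
    (x : ℕ → EuclideanSpace ℝ (Fin (N + 1))) (n : ℕ → ℝ) (δ γ B : ℝ)
    (hδ : 0 < δ)
    (hn : ∀ k, |n k| ≤ B) (hγ : 2 * B ≤ γ)
    (w : ℕ → EuclideanSpace ℝ (Fin (N + 1)))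
    (d e α μb : ℕ → ℝ)
    (hd : ∀ k, d k = ⟪w_o, x k⟫ + n k)
    (he : ∀ k, e k = d k - ⟪w k, x k⟫)
    (hα : ∀ k, α k = ‖x k‖ ^ 2 + δ)
    (hμ : ∀ k, μb k = 1 - γ / |e k|)
    (hupd : ∀ k, w (k + 1) =
      if γ < |e k| then w k + ((μb k / α k) * e k) • x k else w k) :
    ∀ K, ‖w_o - w K‖ ≤ ‖w_o - w 0‖ := by
  intro K
  refine antitone_nat_of_succ_le (f := fun K => ‖w_o - w K‖) (fun k => ?_) (Nat.zero_le K)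
  have hinner : ⟪w_o - w k, x k⟫ = e k - n k := by
    rw [he, hd, inner_sub_left]; ring
  rw [hupd k]
  split_ifs with hE
  · rw [← sub_sub]
    refine norm_sub_smul_le_norm_of_sq_mul_le ?_
    have hμ0 : 0 ≤ μb k := by
      rw [hμ, sub_nonneg]
      exact div_le_one_of_le₀ hE.le (abs_nonneg _)
    rw [hinner]
    refine sq_mul_le_of_mul_sq_le hμ0 (by rw [hα]; positivity) (by rw [hα]; linarith) ?_
    rw [hμ]
    exact one_sub_div_abs_mul_sq_le (hn k) hγ hE
  · exact le_rfl

/-- strong global robustness of the SM-NLMS algorithm: if the noise is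
bounded by a known constant `B` and the threshold satisfies `γ ≥ 2B`, then the sequence
of coefficient deviations never exceeds the initial deviation. -/
theorem sm_nlms_strong_global_robustness (N : ℕ)
    (w_o : EuclideanSpace ℝ (Fin (N + 1)))
    (x : ℕ → EuclideanSpace ℝ (Fin (N + 1))) (n : ℕ → ℝ) (δ γ B : ℝ)
    (hδ : 0 < δ) (hγ0 : 0 ≤ γ) (hB : 0 ≤ B)
    (hn : ∀ k, |n k| ≤ B) (hγ : 2 * B ≤ γ)
    (w : ℕ → EuclideanSpace ℝ (Fin (N + 1)))
    (d e et α μb : ℕ → ℝ)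
    (hd : ∀ k, d k = ⟪w_o, x k⟫ + n k)
    (he : ∀ k, e k = d k - ⟪w k, x k⟫)
    (het : ∀ k, et k = ⟪w_o - w k, x k⟫)
    (hα : ∀ k, α k = ‖x k‖ ^ 2 + δ)
    (hμ : ∀ k, μb k = 1 - γ / |e k|)
    (hupd : ∀ k, w (k + 1) =
      if γ < |e k| then w k + ((μb k / α k) * e k) • x k else w k) :
    ∀ K, ‖w_o - w K‖ ≤ ‖w_o - w 0‖ :=
  sm_nlms_strong_global_robustness_general N w_o x n δ γ B hδ hn hγ w d e α μb hd he hα hμ hupd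
end

section
/- Let γ̄ ≥ 0, suppose x ≠ 0 and |e| > γ̄, and let w' = w + ((1 − γ̄/|e|)/‖x‖²) e x be the unregularized SM-NLMS update (δ = 0). Then the a posteriori error lies exactly on the boundary of the constraint set: |d − ⟨w', x⟩| = γ̄. -/
open RealInnerProductSpace

/-- after an (unregularized) SM-NLMS update triggered by `|e| > γ`, the
a posteriori error lies exactly on the boundary of the constraint set. -/
theorem sm_nlms_posteriori_error_on_boundary (N : ℕ)
    (w x : EuclideanSpace ℝ (Fin (N + 1))) (d γ : ℝ)
    (hγ : 0 ≤ γ) (hx : x ≠ 0) :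
    let e : ℝ := d - ⟪w, x⟫
    let w' : EuclideanSpace ℝ (Fin (N + 1)) :=
      w + (((1 - γ / |e|) / ‖x‖ ^ 2) * e) • x
    γ < |e| → |d - ⟪w', x⟫| = γ := by
  intro e w' h
  have he : e ≠ 0 := by
    intro h0; rw [h0] at h; simp at h; linarith
  have hxn : ‖x‖ ^ 2 ≠ 0 := pow_ne_zero 2 (norm_ne_zero_iff.mpr hx)
  have h1 : ⟪w', x⟫ = ⟪w, x⟫ + (((1 - γ / |e|) / ‖x‖ ^ 2) * e) * ‖x‖ ^ 2 := by
    rw [inner_add_left, real_inner_smul_left, real_inner_self_eq_norm_sq]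
  have key : d - ⟪w', x⟫ = (γ / |e|) * e := by
    rw [h1, div_mul_eq_mul_div, div_mul_cancel₀ _ hxn, sub_add_eq_sub_sub]
    show e - (1 - γ / |e|) * e = _
    ring
  rw [key, abs_mul, abs_div, abs_abs, abs_of_nonneg hγ, div_mul_cancel₀]
  simpa using he
end

section
/- SM-AP energy identity: with w' = w + X A (e − γ), one has ‖w_o − w'‖² + ẽᵀ A ẽ = ‖w_o − w‖² + nᵀ A n − 2 γᵀ A n + γᵀ A γ. -/
/-!
Write v = w_o − w and s = e − γ, so that w_o − w' = v − X A s. Because A is symmetric and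
(XᵀX) A = 1, ‖v − X A s‖² = ‖v‖² − 2 (Xᵀv)ᵀ A s + sᵀ A s; adding ẽᵀ A ẽ with ẽ = Xᵀ v completes
the square to ‖v‖² + (s − ẽ)ᵀ A (s − ẽ), and s − ẽ = n − γ.
-/

open Matrix

namespace Matrix

variable {m k R : Type*} [Fintype m] [Fintype k] [CommRing R]

theorem IsSymm.dotProduct_mulVec_comm {A : Matrix k k R} (hA : A.IsSymm) (u v : k → R) :
    u ⬝ᵥ A *ᵥ v = v ⬝ᵥ A *ᵥ u := by
  rw [dotProduct_mulVec, ← mulVec_transpose, hA.eq, dotProduct_comm]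

theorem IsSymm.dotProduct_mulVec_sub_sub {A : Matrix k k R} (hA : A.IsSymm) (a b : k → R) :
    (a - b) ⬝ᵥ A *ᵥ (a - b) = a ⬝ᵥ A *ᵥ a - 2 * (b ⬝ᵥ A *ᵥ a) + b ⬝ᵥ A *ᵥ b := by
  simp only [mulVec_sub, dotProduct_sub, sub_dotProduct, hA.dotProduct_mulVec_comm a b]
  ring

theorem dotProduct_mulVec_eq_transpose_mulVec_dotProduct (X : Matrix m k R) (v : m → R)
    (u : k → R) : v ⬝ᵥ X *ᵥ u = Xᵀ *ᵥ v ⬝ᵥ u := by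
  rw [dotProduct_mulVec, mulVec_transpose]

theorem mulVec_dotProduct_mulVec (X : Matrix m k R) (u u' : k → R) :
    X *ᵥ u ⬝ᵥ X *ᵥ u' = u ⬝ᵥ (Xᵀ * X) *ᵥ u' := by
  rw [dotProduct_comm, dotProduct_mulVec_eq_transpose_mulVec_dotProduct, mulVec_mulVec,
    dotProduct_comm]

variable [DecidableEq k]

theorem isSymm_inv_transpose_mul_self (X : Matrix m k R) : ((Xᵀ * X)⁻¹).IsSymm :=
  IsSymm.inv <| by rw [IsSymm, transpose_mul, transpose_transpose]

theorem sub_mulVec_gram_inv_dotProduct_self (X : Matrix m k R) (hX : IsUnit (Xᵀ * X))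
    (v : m → R) (s : k → R) :
    (v - X *ᵥ (Xᵀ * X)⁻¹ *ᵥ s) ⬝ᵥ (v - X *ᵥ (Xᵀ * X)⁻¹ *ᵥ s)
        + Xᵀ *ᵥ v ⬝ᵥ (Xᵀ * X)⁻¹ *ᵥ (Xᵀ *ᵥ v) =
      v ⬝ᵥ v + (s - Xᵀ *ᵥ v) ⬝ᵥ (Xᵀ * X)⁻¹ *ᵥ (s - Xᵀ *ᵥ v) := by
  have hquad : X *ᵥ (Xᵀ * X)⁻¹ *ᵥ s ⬝ᵥ X *ᵥ (Xᵀ * X)⁻¹ *ᵥ s = s ⬝ᵥ (Xᵀ * X)⁻¹ *ᵥ s := by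
    rw [mulVec_dotProduct_mulVec, mulVec_mulVec,
      mul_nonsing_inv _ ((isUnit_iff_isUnit_det _).mp hX), one_mulVec, dotProduct_comm]
  rw [(isSymm_inv_transpose_mul_self X).dotProduct_mulVec_sub_sub, sub_dotProduct,
    dotProduct_sub, dotProduct_sub, hquad, dotProduct_comm (X *ᵥ _) v,
    dotProduct_mulVec_eq_transpose_mulVec_dotProduct]
  ring

end Matrix

theorem EuclideanSpace.norm_sq_eq_dotProduct {ι : Type*} [Fintype ι] (x : EuclideanSpace ℝ ι) :
    ‖x‖ ^ 2 = x.ofLp ⬝ᵥ x.ofLp := by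
  rw [← real_inner_self_eq_norm_sq, EuclideanSpace.inner_eq_star_dotProduct, star_trivial]

/-- the SM-AP energy identity. -/
theorem sm_ap_energy_identity (N L : ℕ)
    (X : Matrix (Fin (N + 1)) (Fin (L + 1)) ℝ) (hX : IsUnit (Xᵀ * X))
    (w_o w : EuclideanSpace ℝ (Fin (N + 1))) (n γv : Fin (L + 1) → ℝ) :
    let A : Matrix (Fin (L + 1)) (Fin (L + 1)) ℝ := (Xᵀ * X)⁻¹
    let d : Fin (L + 1) → ℝ := Xᵀ *ᵥ w_o + n
    let e : Fin (L + 1) → ℝ := d - Xᵀ *ᵥ w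
    let et : Fin (L + 1) → ℝ := Xᵀ *ᵥ (w_o - w)
    let w' : EuclideanSpace ℝ (Fin (N + 1)) :=
      w + (EuclideanSpace.equiv (Fin (N + 1)) ℝ).symm (X *ᵥ (A *ᵥ (e - γv)))
    ‖w_o - w'‖ ^ 2 + et ⬝ᵥ A *ᵥ et =
      ‖w_o - w‖ ^ 2 + n ⬝ᵥ A *ᵥ n - 2 * (γv ⬝ᵥ A *ᵥ n) + γv ⬝ᵥ A *ᵥ γv := by
  intro A d e et w'
  have hw' : (w_o - w').ofLp = (w_o - w).ofLp - X *ᵥ A *ᵥ (e - γv) := by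
    simp only [w', WithLp.ofLp_sub, WithLp.ofLp_add]
    exact sub_add_eq_sub_sub _ _ _
  have het : et = Xᵀ *ᵥ (w_o - w).ofLp := rfl
  have hnoise : e - γv - et = n - γv := by
    simp only [e, d, et, mulVec_sub]
    abel
  rw [EuclideanSpace.norm_sq_eq_dotProduct, EuclideanSpace.norm_sq_eq_dotProduct, hw', het,
    sub_mulVec_gram_inv_dotProduct_self X hX, ← het, hnoise,
    (isSymm_inv_transpose_mul_self X).dotProduct_mulVec_sub_sub]
  ring
end

section
/- Theorem (Local robustness of SM-AP). With w' = w + X A (e − γ), the following trichotomy holds: (i) if γᵀ A γ < 2 γᵀ A n then ‖w_o − w'‖² + ẽᵀ A ẽ < ‖w_o − w‖² + nᵀ A n; (ii) if γᵀ A γ = 2 γᵀ A n then ‖w_o − w'‖² + ẽᵀ A ẽ = ‖w_o − w‖² + nᵀ A n; (iii) if γᵀ A γ > 2 γᵀ A n then ‖w_o − w'‖² + ẽᵀ A ẽ > ‖w_o − w‖² + nᵀ A n. -/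
open Matrix

lemma dot_shift {k m : ℕ} (X : Matrix (Fin k) (Fin m) ℝ) (v : Fin k → ℝ) (u : Fin m → ℝ) :
    v ⬝ᵥ X *ᵥ u = (Xᵀ *ᵥ v) ⬝ᵥ u := by
  rw [dotProduct_mulVec, mulVec_transpose]

lemma dot_shift' {k m : ℕ} (X : Matrix (Fin k) (Fin m) ℝ) (v : Fin k → ℝ) (u : Fin m → ℝ) :
    (X *ᵥ u) ⬝ᵥ v = u ⬝ᵥ (Xᵀ *ᵥ v) := by
  rw [dotProduct_comm, dot_shift, dotProduct_comm]

lemma bilin_symm {m : ℕ} (A : Matrix (Fin m) (Fin m) ℝ) (hA : Aᵀ = A) (u v : Fin m → ℝ) :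
    u ⬝ᵥ A *ᵥ v = v ⬝ᵥ A *ᵥ u := by
  rw [dot_shift, hA, dotProduct_comm]

lemma dot_main {k m : ℕ} (X : Matrix (Fin k) (Fin m) ℝ) (A : Matrix (Fin m) (Fin m) ℝ)
    (hABA : A * (Xᵀ * X) * A = A) (hAs : Aᵀ = A) (n γ : Fin m → ℝ) (D : Fin k → ℝ) :
    (D - X *ᵥ (A *ᵥ (Xᵀ *ᵥ D + n - γ))) ⬝ᵥ (D - X *ᵥ (A *ᵥ (Xᵀ *ᵥ D + n - γ)))
        + (Xᵀ *ᵥ D) ⬝ᵥ A *ᵥ (Xᵀ *ᵥ D)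
      = D ⬝ᵥ D + n ⬝ᵥ A *ᵥ n + (γ ⬝ᵥ A *ᵥ γ - 2 * (γ ⬝ᵥ A *ᵥ n)) := by
  set Δ := Xᵀ *ᵥ D with hΔ
  set c := Δ + n - γ with hc
  have h1 : D ⬝ᵥ (X *ᵥ (A *ᵥ c)) = Δ ⬝ᵥ A *ᵥ c := by rw [dot_shift]
  have h2 : (X *ᵥ (A *ᵥ c)) ⬝ᵥ D = Δ ⬝ᵥ A *ᵥ c := by
    rw [dotProduct_comm]; exact h1
  have h3 : (X *ᵥ (A *ᵥ c)) ⬝ᵥ (X *ᵥ (A *ᵥ c)) = c ⬝ᵥ A *ᵥ c := by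
    rw [dot_shift', dot_shift' A, mulVec_mulVec, mulVec_mulVec, mulVec_mulVec, hAs,
      Matrix.mul_assoc A Xᵀ X, hABA]
  rw [sub_dotProduct, dotProduct_sub, dotProduct_sub, h1, h2, h3]
  have expand : ∀ u : Fin m → ℝ, u ⬝ᵥ A *ᵥ c =
      u ⬝ᵥ A *ᵥ Δ + u ⬝ᵥ A *ᵥ n - u ⬝ᵥ A *ᵥ γ := by
    intro u
    rw [hc, mulVec_sub, mulVec_add, dotProduct_sub, dotProduct_add]
  have e2 : c ⬝ᵥ A *ᵥ c = Δ ⬝ᵥ A *ᵥ c + n ⬝ᵥ A *ᵥ c - γ ⬝ᵥ A *ᵥ c := by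
    rw [hc, sub_dotProduct, add_dotProduct]
  have e1 := expand Δ
  have e3 := expand n
  have e4 := expand γ
  have s1 := bilin_symm A hAs Δ n
  have s2 := bilin_symm A hAs Δ γ
  have s3 := bilin_symm A hAs n γ
  rw [e2, e1, e3, e4]
  linarith

/-- local robustness of the SM-AP algorithm (trichotomy depending on the
constraint vector). -/
theorem sm_ap_local_robustness (N L : ℕ)
    (X : Matrix (Fin (N + 1)) (Fin (L + 1)) ℝ) (hX : IsUnit (Xᵀ * X))
    (w_o w : EuclideanSpace ℝ (Fin (N + 1))) (n γv : Fin (L + 1) → ℝ) :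
    let A : Matrix (Fin (L + 1)) (Fin (L + 1)) ℝ := (Xᵀ * X)⁻¹
    let d : Fin (L + 1) → ℝ := Xᵀ *ᵥ w_o + n
    let e : Fin (L + 1) → ℝ := d - Xᵀ *ᵥ w
    let et : Fin (L + 1) → ℝ := Xᵀ *ᵥ (w_o - w)
    let w' : EuclideanSpace ℝ (Fin (N + 1)) :=
      w + (EuclideanSpace.equiv (Fin (N + 1)) ℝ).symm (X *ᵥ (A *ᵥ (e - γv)))
    (γv ⬝ᵥ A *ᵥ γv < 2 * (γv ⬝ᵥ A *ᵥ n) →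
      ‖w_o - w'‖ ^ 2 + et ⬝ᵥ A *ᵥ et < ‖w_o - w‖ ^ 2 + n ⬝ᵥ A *ᵥ n) ∧
    (γv ⬝ᵥ A *ᵥ γv = 2 * (γv ⬝ᵥ A *ᵥ n) →
      ‖w_o - w'‖ ^ 2 + et ⬝ᵥ A *ᵥ et = ‖w_o - w‖ ^ 2 + n ⬝ᵥ A *ᵥ n) ∧
    (γv ⬝ᵥ A *ᵥ γv > 2 * (γv ⬝ᵥ A *ᵥ n) →
      ‖w_o - w'‖ ^ 2 + et ⬝ᵥ A *ᵥ et > ‖w_o - w‖ ^ 2 + n ⬝ᵥ A *ᵥ n) := by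
  intro A d e et w'
  have normsq : ∀ x : EuclideanSpace ℝ (Fin (N + 1)),
      ‖x‖ ^ 2 = (x : Fin (N + 1) → ℝ) ⬝ᵥ (x : Fin (N + 1) → ℝ) := by
    intro x
    rw [EuclideanSpace.norm_eq, Real.sq_sqrt (by positivity)]
    simp [dotProduct, sq]
  have hAs : Aᵀ = A := by
    show ((Xᵀ * X)⁻¹)ᵀ = (Xᵀ * X)⁻¹
    rw [Matrix.transpose_nonsing_inv, Matrix.transpose_mul, Matrix.transpose_transpose]
  have hdet : IsUnit (Xᵀ * X).det := (Matrix.isUnit_iff_isUnit_det _).mp hX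
  have hABA : A * (Xᵀ * X) * A = A := by
    show (Xᵀ * X)⁻¹ * (Xᵀ * X) * (Xᵀ * X)⁻¹ = (Xᵀ * X)⁻¹
    rw [Matrix.nonsing_inv_mul _ hdet, Matrix.one_mul]
  set D : Fin (N + 1) → ℝ := fun i => w_o i - w i with hD
  have hDeq : ((w_o - w : EuclideanSpace ℝ (Fin (N + 1))) : Fin (N + 1) → ℝ) = D := rfl
  have het : et = Xᵀ *ᵥ D := rfl
  have heγ : e - γv = Xᵀ *ᵥ D + n - γv := by
    ext i
    show (Xᵀ *ᵥ w_o) i + n i - (Xᵀ *ᵥ w) i - γv i = (Xᵀ *ᵥ D) i + n i - γv i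
    have : (Xᵀ *ᵥ D) i = (Xᵀ *ᵥ (w_o : Fin (N + 1) → ℝ)) i - (Xᵀ *ᵥ (w : Fin (N + 1) → ℝ)) i := by
      simp [mulVec, dotProduct, hD, mul_sub, Finset.sum_sub_distrib]
    rw [this]
    ring
  have hDfun : ((w_o - w' : EuclideanSpace ℝ (Fin (N + 1))) : Fin (N + 1) → ℝ)
      = D - X *ᵥ (A *ᵥ (Xᵀ *ᵥ D + n - γv)) := by
    rw [← heγ]
    ext i
    show w_o i - (w i + (X *ᵥ (A *ᵥ (e - γv))) i) = D i - (X *ᵥ (A *ᵥ (e - γv))) i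
    rw [hD]
    ring
  have key : ‖w_o - w'‖ ^ 2 + et ⬝ᵥ A *ᵥ et
      = ‖w_o - w‖ ^ 2 + n ⬝ᵥ A *ᵥ n + (γv ⬝ᵥ A *ᵥ γv - 2 * (γv ⬝ᵥ A *ᵥ n)) := by
    rw [normsq, normsq, hDfun, hDeq, het]
    exact dot_main X A hABA hAs n γv D
  exact ⟨fun h => by linarith, fun h => by linarith, fun h => by linarith⟩
end

section
/- Corollary (Global robustness of SM-AP). Let K ∈ ℕ and let K_up = {k : 0 ≤ k < K and |e₀(k)| > γ̄} be the set of iterations before K at which an update occurs. Suppose that at every k ∈ K_up the constraint vector satisfies γ(k)ᵀ A(k) γ(k) ≤ 2 γ(k)ᵀ A(k) n(k). Then ‖w_o − w(K)‖² + Σ_{k ∈ K_up} ẽ(k)ᵀ A(k) ẽ(k) ≤ ‖w_o − w(0)‖² + Σ_{k ∈ K_up} n(k)ᵀ A(k) n(k). -/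
open Matrix

theorem sm_key_aux (m p : ℕ) (X : Matrix (Fin m) (Fin p) ℝ) (A : Matrix (Fin p) (Fin p) ℝ)
    (hBA : Xᵀ * X * A = 1) (hAT : Aᵀ = A) (u : Fin m → ℝ) (s : Fin p → ℝ) :
    (u - X *ᵥ (A *ᵥ (Xᵀ *ᵥ u + s))) ⬝ᵥ (u - X *ᵥ (A *ᵥ (Xᵀ *ᵥ u + s)))
      = u ⬝ᵥ u - (Xᵀ *ᵥ u) ⬝ᵥ A *ᵥ (Xᵀ *ᵥ u) + s ⬝ᵥ A *ᵥ s := by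
  have h1 : ∀ (a : Fin m → ℝ) (b : Fin p → ℝ), a ⬝ᵥ X *ᵥ b = (Xᵀ *ᵥ a) ⬝ᵥ b := by
    intro a b
    rw [Matrix.dotProduct_mulVec, Matrix.mulVec_transpose]
  have h1' : ∀ (a : Fin m → ℝ) (b : Fin p → ℝ), (X *ᵥ b) ⬝ᵥ a = (Xᵀ *ᵥ a) ⬝ᵥ b := by
    intro a b; rw [dotProduct_comm, h1]
  have h2 : ∀ (a b : Fin p → ℝ), (X *ᵥ (A *ᵥ a)) ⬝ᵥ (X *ᵥ (A *ᵥ b)) = a ⬝ᵥ A *ᵥ b := by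
    intro a b
    rw [h1, Matrix.mulVec_mulVec, Matrix.mulVec_mulVec, hBA, Matrix.one_mulVec]
  have h3 : ∀ (a b : Fin p → ℝ), a ⬝ᵥ A *ᵥ b = b ⬝ᵥ A *ᵥ a := by
    intro a b
    rw [Matrix.dotProduct_mulVec, ← hAT, Matrix.vecMul_transpose, dotProduct_comm, hAT]
  simp only [Matrix.mulVec_add, dotProduct_sub, sub_dotProduct,
    dotProduct_add, add_dotProduct]
  rw [h2, h2, h2, h2, h1, h1, h1', h1', h3 s (Xᵀ *ᵥ u)]
  ring

theorem sm_norm_sq (m : ℕ) (v : EuclideanSpace ℝ (Fin m)) :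
    ‖v‖ ^ 2 = (EuclideanSpace.equiv (Fin m) ℝ v) ⬝ᵥ (EuclideanSpace.equiv (Fin m) ℝ v) := by
  rw [EuclideanSpace.norm_eq, Real.sq_sqrt (by positivity)]
  simp [dotProduct, Real.norm_eq_abs, sq_abs, sq, EuclideanSpace.equiv]

/-- global robustness of the SM-AP algorithm, provided the constraint
vector satisfies the robustness condition at every updating iteration. -/
theorem sm_ap_global_robustness (N L : ℕ)
    (w_o : EuclideanSpace ℝ (Fin (N + 1))) (γbar : ℝ) (hγ : 0 ≤ γbar)
    (X : ℕ → Matrix (Fin (N + 1)) (Fin (L + 1)) ℝ)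
    (hX : ∀ k, IsUnit ((X k)ᵀ * X k))
    (n γv : ℕ → Fin (L + 1) → ℝ)
    (w : ℕ → EuclideanSpace ℝ (Fin (N + 1)))
    (A : ℕ → Matrix (Fin (L + 1)) (Fin (L + 1)) ℝ)
    (hA : ∀ k, A k = ((X k)ᵀ * X k)⁻¹)
    (d e et : ℕ → Fin (L + 1) → ℝ)
    (hd : ∀ k, d k = (X k)ᵀ *ᵥ w_o + n k)
    (he : ∀ k, e k = d k - (X k)ᵀ *ᵥ w k)
    (het : ∀ k, et k = (X k)ᵀ *ᵥ (w_o - w k))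
    (hupd : ∀ k, w (k + 1) =
      if γbar < |e k 0| then
        w k + (EuclideanSpace.equiv (Fin (N + 1)) ℝ).symm
          (X k *ᵥ (A k *ᵥ (e k - γv k)))
      else w k)
    (K : ℕ) (Kup : Finset ℕ)
    (hKup : Kup = (Finset.range K).filter fun k => γbar < |e k 0|)
    (hcond : ∀ k ∈ Kup, γv k ⬝ᵥ A k *ᵥ γv k ≤ 2 * (γv k ⬝ᵥ A k *ᵥ n k)) :
    ‖w_o - w K‖ ^ 2 + ∑ k ∈ Kup, et k ⬝ᵥ A k *ᵥ et k ≤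
      ‖w_o - w 0‖ ^ 2 + ∑ k ∈ Kup, n k ⬝ᵥ A k *ᵥ n k := by
  subst hKup
  -- basic matrix facts
  have hBA : ∀ k, (X k)ᵀ * X k * A k = 1 := by
    intro k
    rw [hA k]
    exact Matrix.mul_nonsing_inv _ ((Matrix.isUnit_iff_isUnit_det _).mp (hX k))
  have hAT : ∀ k, (A k)ᵀ = A k := by
    intro k
    rw [hA k, Matrix.transpose_nonsing_inv, Matrix.transpose_mul, Matrix.transpose_transpose]
  have h3 : ∀ k (a b : Fin (L + 1) → ℝ), a ⬝ᵥ A k *ᵥ b = b ⬝ᵥ A k *ᵥ a := by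
    intro k a b
    rw [Matrix.dotProduct_mulVec, ← hAT k, Matrix.vecMul_transpose, dotProduct_comm,
      hAT k]
  -- the per-update-step inequality
  have hstep : ∀ k, γbar < |e k 0| →
      (γv k ⬝ᵥ A k *ᵥ γv k ≤ 2 * (γv k ⬝ᵥ A k *ᵥ n k)) →
      ‖w_o - w (k + 1)‖ ^ 2 + et k ⬝ᵥ A k *ᵥ et k ≤
        ‖w_o - w k‖ ^ 2 + n k ⬝ᵥ A k *ᵥ n k := by
    intro k hk hc
    have hu : EuclideanSpace.equiv (Fin (N + 1)) ℝ (w_o - w k)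
        = (w_o : Fin (N + 1) → ℝ) - (w k : Fin (N + 1) → ℝ) := rfl
    have hetk : et k = (X k)ᵀ *ᵥ EuclideanSpace.equiv (Fin (N + 1)) ℝ (w_o - w k) := het k
    have hek : e k = (X k)ᵀ *ᵥ EuclideanSpace.equiv (Fin (N + 1)) ℝ (w_o - w k) + n k := by
      rw [he k, hd k, hu, Matrix.mulVec_sub]
      abel
    have hvec : e k - γv k
        = (X k)ᵀ *ᵥ EuclideanSpace.equiv (Fin (N + 1)) ℝ (w_o - w k) + (n k - γv k) := by
      rw [hek]; abel
    have hsub : w_o - w (k + 1) = w_o - w k - (EuclideanSpace.equiv (Fin (N + 1)) ℝ).symm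
        (X k *ᵥ (A k *ᵥ (e k - γv k))) := by
      rw [hupd k, if_pos hk]; abel
    have hw1 : EuclideanSpace.equiv (Fin (N + 1)) ℝ (w_o - w (k + 1))
        = EuclideanSpace.equiv (Fin (N + 1)) ℝ (w_o - w k)
          - X k *ᵥ (A k *ᵥ ((X k)ᵀ *ᵥ EuclideanSpace.equiv (Fin (N + 1)) ℝ (w_o - w k)
              + (n k - γv k))) := by
      rw [hsub, ← hvec]
      rfl
    have hkey := sm_key_aux (N + 1) (L + 1) (X k) (A k) (hBA k) (hAT k)
      (EuclideanSpace.equiv (Fin (N + 1)) ℝ (w_o - w k)) (n k - γv k)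
    have hfinal : (EuclideanSpace.equiv (Fin (N + 1)) ℝ (w_o - w (k + 1)))
          ⬝ᵥ (EuclideanSpace.equiv (Fin (N + 1)) ℝ (w_o - w (k + 1)))
        = (EuclideanSpace.equiv (Fin (N + 1)) ℝ (w_o - w k))
            ⬝ᵥ (EuclideanSpace.equiv (Fin (N + 1)) ℝ (w_o - w k))
          - et k ⬝ᵥ A k *ᵥ et k + (n k - γv k) ⬝ᵥ A k *ᵥ (n k - γv k) := by
      rw [hw1, hetk]; exact hkey
    have hs : (n k - γv k) ⬝ᵥ A k *ᵥ (n k - γv k) ≤ n k ⬝ᵥ A k *ᵥ n k := by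
      simp only [Matrix.mulVec_sub, dotProduct_sub, sub_dotProduct]
      rw [h3 k (n k) (γv k)]
      linarith
    rw [sm_norm_sq, sm_norm_sq, hfinal]
    linarith
  -- induction on K
  induction K with
  | zero => simp
  | succ K ih =>
    rw [Finset.range_add_one, Finset.filter_insert] at *
    by_cases hK : γbar < |e K 0|
    · rw [if_pos hK] at *
      have hKnot : K ∉ (Finset.range K).filter fun k => γbar < |e k 0| := by
        simp
      rw [Finset.sum_insert hKnot, Finset.sum_insert hKnot]
      have hcK := hcond K (Finset.mem_insert_self _ _)
      have hcond' : ∀ k ∈ (Finset.range K).filter fun k => γbar < |e k 0|,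
          γv k ⬝ᵥ A k *ᵥ γv k ≤ 2 * (γv k ⬝ᵥ A k *ᵥ n k) := fun k hk =>
        hcond k (Finset.mem_insert_of_mem hk)
      have := ih hcond'
      have hst := hstep K hK hcK
      linarith
    · rw [if_neg hK] at *
      have hwK : w (K + 1) = w K := by rw [hupd K, if_neg hK]
      rw [hwK]
      exact ih hcond
end

section
/- Non-divergence bound for SM-AP: let w' = w + X A (e − γ) be the SM-AP update, where d = Xᵀ w_o + n. If every entry of the constraint vector satisfies |γ_l| ≤ γ̄ and every noise entry satisfies |n_l| ≤ B, then every entry of the a posteriori noiseless error is bounded: |(Xᵀ (w_o − w'))_l| ≤ γ̄ + B for all l. -/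
open Matrix

/-- non-divergence bound for the SM-AP algorithm: if the constraint
vector is entrywise bounded by `γ̄` and the noise is entrywise bounded by `B`, then
every entry of the a posteriori noiseless error is bounded by `γ̄ + B`. -/
theorem sm_ap_non_divergence (N L : ℕ)
    (X : Matrix (Fin (N + 1)) (Fin (L + 1)) ℝ) (hX : IsUnit (Xᵀ * X))
    (w_o w : Fin (N + 1) → ℝ) (n γv : Fin (L + 1) → ℝ) (γbar B : ℝ)
    (hγbar : 0 ≤ γbar) (hB : 0 ≤ B)
    (hγv : ∀ l, |γv l| ≤ γbar) (hn : ∀ l, |n l| ≤ B) :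
    let A : Matrix (Fin (L + 1)) (Fin (L + 1)) ℝ := (Xᵀ * X)⁻¹
    let d : Fin (L + 1) → ℝ := Xᵀ *ᵥ w_o + n
    let e : Fin (L + 1) → ℝ := d - Xᵀ *ᵥ w
    let w' : Fin (N + 1) → ℝ := w + X *ᵥ (A *ᵥ (e - γv))
    ∀ l, |(Xᵀ *ᵥ (w_o - w')) l| ≤ γbar + B := by
  intro A d e w' l
  have hdet : IsUnit (Xᵀ * X).det := (Matrix.isUnit_iff_isUnit_det _).mp hX
  have hinv : (Xᵀ * X) * A = 1 := Matrix.mul_nonsing_inv _ hdet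
  have key : Xᵀ *ᵥ (w_o - w') = γv - n := by
    have h1 : Xᵀ *ᵥ (X *ᵥ (A *ᵥ (e - γv))) = e - γv := by
      rw [Matrix.mulVec_mulVec, Matrix.mulVec_mulVec, hinv, Matrix.one_mulVec]
    show Xᵀ *ᵥ (w_o - (w + X *ᵥ (A *ᵥ (e - γv)))) = γv - n
    rw [Matrix.mulVec_sub, Matrix.mulVec_add, h1]
    show Xᵀ *ᵥ w_o - (Xᵀ *ᵥ w + ((Xᵀ *ᵥ w_o + n) - Xᵀ *ᵥ w - γv)) = γv - n
    abel
  rw [key]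
  calc |(γv - n) l| = |γv l - n l| := rfl
    _ ≤ |γv l| + |n l| := abs_sub _ _
    _ ≤ γbar + B := add_le_add (hγv l) (hn l)
end
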